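/- arXiv:2312.05547 — 3 statements merged into one kernel-verified Lean document; each statement's English description precedes it below -/
import Mathlib

section
/- Chen's identity: for bounded-variation paths X : [a,b] → ℝ^d and Y : [b,c] → ℝ^d with X(b) = Y(b), the signature of the concatenation X * Y equals the tensor product of the signatures: S(X * Y)_{a,c} = S(X)_{a,b} ⊗ S(Y)_{b,c}, where level k of the product is Σ_{ℓ=0}^k S(X)_ℓ ⊗ S(Y)_{k-ℓ}. It suffices to prove this for piecewise linear paths. -/
/-- Signature coefficients of a path with derivative `σ'`, over the interval from the last
argument up to `b`; the head of the word is the earliest-integrated coordinate. -/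
noncomputable def sig {d : ℕ} (σ' : ℝ → Fin d → ℝ) (b : ℝ) : List (Fin d) → ℝ → ℝ
  | [], _ => 1
  | i :: w, t => ∫ s in t..b, σ' s i * sig σ' b w s

/-! Prove the identity for every left endpoint `t` in place of `a`, by induction on the word.
Peeling off the first letter `i` and splitting `∫ t..c` at `b` turns the left side into
`∫ t..b σ'ᵢ · S_{s,c}(w) ds + S_{b,c}(i :: w)`; the induction hypothesis for `S_{s,c}(w)` under
the integral produces exactly the terms `ℓ ≥ 1` of the right side, and the remaining summand is
the term `ℓ = 0`. -/

namespace sig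

variable {d : ℕ} {σ' : ℝ → Fin d → ℝ}

theorem continuous (hσ' : ∀ i, Continuous fun t => σ' t i) (b : ℝ) :
    ∀ w : List (Fin d), Continuous (sig σ' b w)
  | [] => continuous_const
  | i :: w => by
    have hprimitive : Continuous fun t => ∫ s in b..t, σ' s i * sig σ' b w s :=
      intervalIntegral.continuous_primitive
        (fun _ _ => ((hσ' i).mul (continuous hσ' b w)).intervalIntegrable _ _) b
    refine hprimitive.neg.congr fun t => ?_
    rw [sig, intervalIntegral.integral_symm]
    rfl

theorem cons_eq_integral_add (hσ' : ∀ i, Continuous fun t => σ' t i)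
    (i : Fin d) (w : List (Fin d)) (t b c : ℝ) :
    sig σ' c (i :: w) t = (∫ s in t..b, σ' s i * sig σ' c w s) + sig σ' c (i :: w) b := by
  have hint : Continuous fun s => σ' s i * sig σ' c w s := (hσ' i).mul (continuous hσ' c w)
  exact (intervalIntegral.integral_add_adjacent_intervals
    (hint.intervalIntegrable t b) (hint.intervalIntegrable b c)).symm

theorem eq_sum_take_mul_drop (hσ' : ∀ i, Continuous fun t => σ' t i) (b c : ℝ) :
    ∀ (w : List (Fin d)) (t : ℝ), sig σ' c w t =
      ∑ n ∈ Finset.range (w.length + 1), sig σ' b (w.take n) t * sig σ' c (w.drop n) b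
  | [], t => by simp [sig]
  | i :: w, t => by
    have hhead : (∫ s in t..b, σ' s i * sig σ' c w s) =
        ∑ n ∈ Finset.range (w.length + 1),
          sig σ' b (i :: w.take n) t * sig σ' c (w.drop n) b := by
      simp_rw [eq_sum_take_mul_drop hσ' b c w, Finset.mul_sum, ← mul_assoc]
      rw [intervalIntegral.integral_finsetSum]
      · simp only [intervalIntegral.integral_mul_const, sig]
      · exact fun n _ =>
          (((hσ' i).mul (continuous hσ' b _)).mul continuous_const).intervalIntegrable t b
    rw [cons_eq_integral_add hσ' i w t b c, hhead, List.length_cons,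
      Finset.sum_range_succ' _ (w.length + 1)]
    simp [sig]

end sig

theorem chen_identity_general (d : ℕ) (a b c : ℝ)
    (σ' : ℝ → Fin d → ℝ) (hσc : ∀ i, Continuous fun t => σ' t i) :
    ∀ w : List (Fin d),
      sig σ' c w a
        = ∑ n ∈ Finset.range (w.length + 1),
            sig σ' b (w.take n) a * sig σ' c (w.drop n) b :=
  fun w => sig.eq_sum_take_mul_drop hσc b c w a

/-- Chen's identity: for a path on `[a,c]` viewed as the concatenation `X * Y` of its
restriction `X` to `[a,b]` and `Y` to `[b,c]` (so the endpoint condition `X(b) = Y(b)` holds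
automatically), the signature of the concatenation is the tensor product of the signatures:
for every word `w` of length `k`,
`S(X*Y)_{a,c}(w) = ∑_{ℓ=0}^k S(X)_{a,b}(first ℓ letters) · S(Y)_{b,c}(last k−ℓ letters)`,
which is the word-coefficient form of `S(X*Y)_k = ∑_{ℓ=0}^k S(X)_ℓ ⊗ S(Y)_{k-ℓ}`. -/
theorem chen_identity (d : ℕ) (a b c : ℝ) (hab : a ≤ b) (hbc : b ≤ c)
    (σ' : ℝ → Fin d → ℝ) (hσc : ∀ i, Continuous fun t => σ' t i) :
    ∀ w : List (Fin d),
      sig σ' c w a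
        = ∑ n ∈ Finset.range (w.length + 1),
            sig σ' b (w.take n) a * sig σ' c (w.drop n) b :=
  chen_identity_general d a b c σ' hσc
end

section
/- For bounded-variation paths X on [a,b], the signature of the reversed path X⁻¹ (traversing X backwards) is the tensor-algebra inverse of S(X): S(X) ⊗ S(X⁻¹) = 1 = (1, 0, 0, ...). It suffices to prove this for piecewise linear paths, where for a single linear segment with increment v, S = exp_⊗(v) and the reversed segment gives exp_⊗(−v), and exp_⊗(v) ⊗ exp_⊗(−v) = 1. -/
/-- Product of tensor series over `ℝ^d` by word coefficients:
`(A ⊗ B)_k = ∑_ℓ a_ℓ ⊗ b_{k-ℓ}`. -/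
def tmul {d : ℕ} (A B : List (Fin d) → ℝ) : List (Fin d) → ℝ :=
  fun w => ∑ n ∈ Finset.range (w.length + 1), A (w.take n) * B (w.drop n)

/-- The unit `1 = (1,0,0,…)` of the tensor algebra. -/
def tone {d : ℕ} : List (Fin d) → ℝ := fun w => if w = [] then 1 else 0

/-- The tensor exponential `exp_⊗(v) = ∑_k v^{⊗k}/k!` by word coefficients. -/
noncomputable def texp {d : ℕ} (v : Fin d → ℝ) : List (Fin d) → ℝ :=
  fun w => (w.map v).prod / (Nat.factorial w.length : ℝ)

open intervalIntegral
open MeasureTheory (volume)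

section

variable {d : ℕ} {σ' : ℝ → Fin d → ℝ}

lemma tone_cons (i : Fin d) (w : List (Fin d)) : tone (i :: w) = 0 := if_neg (List.cons_ne_nil i w)

lemma tmul_cons (A B : List (Fin d) → ℝ) (i : Fin d) (w : List (Fin d)) :
    tmul A B (i :: w) = A [] * B (i :: w) + tmul (fun u => A (i :: u)) B w := by
  simp only [tmul, List.length_cons, Finset.sum_range_succ' _ (w.length + 1), List.take_zero,
    List.drop_zero, List.take_succ_cons, List.drop_succ_cons]
  ring

@[simp] lemma sig_nil (t s : ℝ) : sig σ' t [] s = 1 := rfl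

lemma sig_cons (t : ℝ) (i : Fin d) (w : List (Fin d)) (s : ℝ) :
    sig σ' t (i :: w) s = ∫ q in s..t, σ' q i * sig σ' t w q := rfl

lemma sig_self (t : ℝ) (w : List (Fin d)) : sig σ' t w t = tone w := by
  cases w with
  | nil => rfl
  | cons i w => rw [sig_cons, integral_same, tone_cons]

lemma continuous_sig (hσ : ∀ i, Continuous fun t => σ' t i) (t : ℝ) (w : List (Fin d)) :
    Continuous (sig σ' t w) := by
  induction w with
  | nil => exact continuous_const
  | cons i w ih =>
    have hf := (hσ i).mul ih
    exact (continuous_primitive (fun _ _ => hf.intervalIntegrable _ _) t).neg.congr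
      fun s => (integral_symm t s).symm

lemma sig_chen (hσ : ∀ i, Continuous fun t => σ' t i) (r t : ℝ) (w : List (Fin d)) (s : ℝ) :
    sig σ' t w s = tmul (fun u => sig σ' r u s) (fun u => sig σ' t u r) w := by
  induction w generalizing s with
  | nil => simp [tmul]
  | cons i w ih =>
    have hint : ∀ x y, IntervalIntegrable (fun q => σ' q i * sig σ' t w q) volume x y :=
      fun _ _ => ((hσ i).mul (continuous_sig hσ t w)).intervalIntegrable _ _
    have head : ∫ q in s..r, σ' q i * sig σ' t w q =
        tmul (fun u => sig σ' r (i :: u) s) (fun u => sig σ' t u r) w := by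
      simp only [ih, tmul, Finset.mul_sum, sig_cons]
      rw [integral_finsetSum]
      · simp only [← mul_assoc, integral_mul_const]
      · exact fun n _ =>
          ((hσ i).mul ((continuous_sig hσ r _).mul continuous_const)).intervalIntegrable _ _
    rw [tmul_cons, ← head, sig_cons, ← integral_add_adjacent_intervals (hint s r) (hint r t),
      sig_nil, one_mul, sig_cons, add_comm]

lemma sig_reverse (c e : ℝ) (w : List (Fin d)) (s : ℝ) :
    sig (fun t i => -σ' (c - t) i) e w s = sig σ' (c - e) w (c - s) := by
  induction w generalizing s with
  | nil => rfl
  | cons i w ih =>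
    simp only [sig_cons, ih, neg_mul, integral_neg,
      integral_comp_sub_left (fun q => σ' q i * sig σ' (c - e) w q) c]
    rw [integral_symm, neg_neg]

lemma tmul_sig_reverse_eq_tone (hσ : ∀ i, Continuous fun t => σ' t i) (a b : ℝ) :
    tmul (fun w => sig σ' b w a) (fun w => sig (fun t i => -σ' (a + b - t) i) b w a) = tone := by
  funext w
  have reverse_eq : ∀ u, sig (fun t i => -σ' (a + b - t) i) b u a = sig σ' a u b := fun u => by
    rw [sig_reverse, add_sub_cancel_right, add_sub_cancel_left]
  simp only [reverse_eq]
  rw [← sig_chen hσ b a w a, sig_self]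

lemma sig_const (v : Fin d → ℝ) (t : ℝ) (w : List (Fin d)) (s : ℝ) :
    sig (fun _ => v) t w s = (t - s) ^ w.length * texp v w := by
  induction w generalizing s with
  | nil => simp [texp]
  | cons i w ih =>
    have power : ∫ q in s..t, (t - q) ^ w.length = (t - s) ^ (w.length + 1) / (w.length + 1) := by
      rw [integral_comp_sub_left (fun x => x ^ w.length), integral_pow, sub_self]
      simp
    simp only [sig_cons, ih, mul_left_comm (v i), integral_mul_const, power, texp, List.map_cons,
      List.prod_cons, List.length_cons, Nat.factorial_succ]
    push_cast
    field_simp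

end

theorem reversed_path_signature_inverse_general (d : ℕ) (a b : ℝ)
    (σ' : ℝ → Fin d → ℝ) (hσc : ∀ i, Continuous fun t => σ' t i) :
    tmul (fun w => sig σ' b w a)
        (fun w => sig (fun t i => -σ' (a + b - t) i) b w a) = tone ∧
    ∀ v : Fin d → ℝ, tmul (texp v) (texp (fun i => -v i)) = tone := by
  refine ⟨tmul_sig_reverse_eq_tone hσc a b, fun v => ?_⟩
  have segment := tmul_sig_reverse_eq_tone (σ' := fun _ => v) (fun _ => continuous_const) 0 1
  simpa only [sig_const, sub_zero, one_pow, one_mul] using segment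

/-- The signature of the reversed path is the tensor-algebra inverse of the signature:
for `X` on `[a,b]` with derivative `σ'`, the reversed path `X⁻¹(t) = X(a+b−t)` has
derivative `t ↦ −σ'(a+b−t)`, and `S(X) ⊗ S(X⁻¹) = 1 = (1,0,0,…)`. Moreover, for a single
linear segment with increment `v` (signature `exp_⊗(v)`), the reversed segment has
signature `exp_⊗(−v)` and `exp_⊗(v) ⊗ exp_⊗(−v) = 1`. -/
theorem reversed_path_signature_inverse (d : ℕ) (a b : ℝ) (hab : a ≤ b)
    (σ' : ℝ → Fin d → ℝ) (hσc : ∀ i, Continuous fun t => σ' t i) :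
    tmul (fun w => sig σ' b w a)
        (fun w => sig (fun t i => -σ' (a + b - t) i) b w a) = tone ∧
    ∀ v : Fin d → ℝ, tmul (texp v) (texp (fun i => -v i)) = tone :=
  reversed_path_signature_inverse_general d a b σ' hσc
end

section
/- Non-representability counterexample: consider states X = {−1, 0, 1}, actions A = {a_{−1}, a_1} with deterministic transitions 0 ↦ −1 under a_{−1} and 0 ↦ 1 under a_1, horizon T = 1, initial state 0, and three policies π_1 (always a_1), π_2 (always a_{−1}), π_3 (each with probability 1/2). Define the signature cost c(π) = |E_π[X_1]| (absolute value of the expected displacement). Then π_3 is the unique minimizer of c, but for every choice of reward function r : A → ℝ, π_3 is not the unique maximizer (nor unique minimizer) of the expected-reward objective V(π) = E_π[r(a)]. Hence no reward function makes the Bellman value objective have the same unique argmin. -/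
/-- Non-representability counterexample. States `{−1,0,1}`, actions `a₁, a₋₁` with
deterministic transitions `0 ↦ 1` and `0 ↦ −1`, horizon 1, initial state 0. The three
policies `π₁, π₂, π₃` take action `a₁` with probability `1, 0, 1/2` respectively. The
signature cost is `c(π) = |E_π[X₁]| = |π(a₁)·1 + (1−π(a₁))·(−1)|` and the expected-reward
objective is `V(π) = π(a₁)·r(a₁) + (1−π(a₁))·r(a₋₁)`. Then `π₃` is the unique minimizer
of `c` over `Π = {π₁,π₂,π₃}`, but for every reward function `r`, `π₃` is neither the unique
maximizer nor the unique minimizer of `V`. -/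
theorem no_reward_represents_signature_cost
    (p : Fin 3 → ℝ) (hp : p = ![1, 0, 1/2])
    (c : Fin 3 → ℝ) (hc : c = fun i => |p i * 1 + (1 - p i) * (-1)|) :
    (∀ i : Fin 3, i ≠ 2 → c 2 < c i) ∧
    ∀ r₁ rm : ℝ,
      (¬ ∀ i : Fin 3, i ≠ 2 →
          p 2 * r₁ + (1 - p 2) * rm > p i * r₁ + (1 - p i) * rm) ∧
      (¬ ∀ i : Fin 3, i ≠ 2 →
          p 2 * r₁ + (1 - p 2) * rm < p i * r₁ + (1 - p i) * rm) := by
  subst hp hc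
  constructor
  · intro i hi
    fin_cases i <;> simp_all <;> norm_num
  · intro r₁ rm
    constructor
    · intro h
      have h1 := h 0 (by decide)
      have h2 := h 1 (by decide)
      simp [Matrix.cons_val_zero, Matrix.cons_val_one] at h1 h2
      nlinarith [h1, h2]
    · intro h
      have h1 := h 0 (by decide)
      have h2 := h 1 (by decide)
      simp [Matrix.cons_val_zero, Matrix.cons_val_one] at h1 h2
      nlinarith [h1, h2]
end
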